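/- arXiv:2009.00265 — 2 statements merged into one kernel-verified Lean document; each statement's English description precedes it below -/
import Mathlib

section
/- For the unit ball Bⁿ and a closed ball J = closed B^n(k,r) ⊂ Bⁿ, the s_{Bⁿ}-diameter of J equals r/(1 − |k|). -/
/-- Triangular ratio metric of the unit ball of ℝⁿ. -/
noncomputable def sB {n : ℕ} (x y : EuclideanSpace ℝ (Fin n)) : ℝ :=
  dist x y / sInf ((fun z => dist x z + dist z y) '' Metric.sphere (0 : EuclideanSpace ℝ (Fin n)) 1)

/-- Key pointwise inequality via Ptolemy. -/
lemma sB_key {n : ℕ} (k x y z : EuclideanSpace ℝ (Fin n)) (r : ℝ)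
    (hx : dist x k ≤ r) (hy : dist y k ≤ r) (hz : ‖z‖ = 1) :
    (1 - ‖k‖) * dist x y ≤ r * (dist x z + dist z y) := by
  have hpt := EuclideanGeometry.mul_dist_le_mul_dist_add_mul_dist x z y k
  have hzk : 1 - ‖k‖ ≤ dist z k := by
    have := norm_sub_norm_le z k
    rw [← dist_eq_norm] at this
    linarith [this, hz.le, hz.ge]
  have h1 : dist x z * dist y k ≤ dist x z * r := by
    exact mul_le_mul_of_nonneg_left hy dist_nonneg
  have h2 : dist z y * dist x k ≤ dist z y * r := by
    exact mul_le_mul_of_nonneg_left hx dist_nonneg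
  have h3 : (1 - ‖k‖) * dist x y ≤ dist x y * dist z k := by
    calc (1 - ‖k‖) * dist x y ≤ dist z k * dist x y :=
          mul_le_mul_of_nonneg_right hzk dist_nonneg
      _ = dist x y * dist z k := mul_comm _ _
  nlinarith [dist_nonneg (x := x) (y := z), dist_nonneg (x := z) (y := y)]

theorem stmt_14 {n : ℕ} (hn : 1 ≤ n) (k : EuclideanSpace ℝ (Fin n)) (r : ℝ)
    (hr : 0 < r) (hJ : ‖k‖ + r < 1) :
    sSup {q : ℝ | ∃ x ∈ Metric.closedBall k r, ∃ y ∈ Metric.closedBall k r, q = sB x y} =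
      r / (1 - ‖k‖) := by
  haveI : Nontrivial (EuclideanSpace ℝ (Fin n)) := by
    have : 0 < Module.finrank ℝ (EuclideanSpace ℝ (Fin n)) := by
      rw [finrank_euclideanSpace_fin]; omega
    exact Module.nontrivial_of_finrank_pos this
  have hknorm : 0 ≤ ‖k‖ := norm_nonneg k
  have ht : (0:ℝ) < 1 - ‖k‖ := by linarith
  have hrt : r < 1 - ‖k‖ := by linarith
  -- the sphere is nonempty
  have hsph : (Metric.sphere (0 : EuclideanSpace ℝ (Fin n)) 1).Nonempty :=
    NormedSpace.sphere_nonempty.2 zero_le_one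
  -- upper bound: sB x y ≤ r / (1 - ‖k‖) for x, y in the closed ball
  have hub : ∀ x ∈ Metric.closedBall k r, ∀ y ∈ Metric.closedBall k r,
      sB x y ≤ r / (1 - ‖k‖) := by
    intro x hx y hy
    rw [Metric.mem_closedBall] at hx hy
    rcases eq_or_ne (dist x y) 0 with hd | hd
    · rw [sB, hd, zero_div]
      positivity
    have hd' : 0 < dist x y := lt_of_le_of_ne dist_nonneg (Ne.symm hd)
    have hinf : (1 - ‖k‖) * dist x y / r ≤
        sInf ((fun z => dist x z + dist z y) ''
          Metric.sphere (0 : EuclideanSpace ℝ (Fin n)) 1) := by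
      apply le_csInf (hsph.image _)
      rintro b ⟨z, hz, rfl⟩
      rw [mem_sphere_zero_iff_norm] at hz
      rw [div_le_iff₀ hr]
      calc (1 - ‖k‖) * dist x y ≤ r * (dist x z + dist z y) := sB_key k x y z r hx hy hz
        _ = (dist x z + dist z y) * r := mul_comm _ _
    have hpos : (0:ℝ) < (1 - ‖k‖) * dist x y / r := by positivity
    rw [sB, div_le_div_iff₀ (lt_of_lt_of_le hpos hinf) ht]
    calc dist x y * (1 - ‖k‖) = (1 - ‖k‖) * dist x y / r * r := by
          field_simp
      _ ≤ sInf _ * r := mul_le_mul_of_nonneg_right hinf hr.le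
      _ = r * sInf _ := mul_comm _ _
  -- a unit vector u with k = ‖k‖ • u
  obtain ⟨u, hu1, hku⟩ : ∃ u : EuclideanSpace ℝ (Fin n), ‖u‖ = 1 ∧ k = ‖k‖ • u := by
    rcases eq_or_ne k 0 with hk | hk
    · obtain ⟨u, hu⟩ := hsph
      rw [mem_sphere_zero_iff_norm] at hu
      exact ⟨u, hu, by simp [hk]⟩
    · refine ⟨‖k‖⁻¹ • k, ?_, ?_⟩
      · rw [norm_smul, norm_inv, norm_norm, inv_mul_cancel₀ (norm_ne_zero_iff.2 hk)]
      · rw [smul_smul, mul_inv_cancel₀ (norm_ne_zero_iff.2 hk), one_smul]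
  -- the extremal pair
  set x : EuclideanSpace ℝ (Fin n) := k + r • u with hxdef
  set y : EuclideanSpace ℝ (Fin n) := k - r • u with hydef
  have hxmem : x ∈ Metric.closedBall k r := by
    rw [Metric.mem_closedBall, dist_eq_norm, hxdef]
    simp [norm_smul, hu1, abs_of_pos hr]
  have hymem : y ∈ Metric.closedBall k r := by
    rw [Metric.mem_closedBall, dist_eq_norm, hydef]
    simp [norm_smul, hu1, abs_of_pos hr]
  have hdxy : dist x y = 2 * r := by
    rw [dist_eq_norm, hxdef, hydef]
    have : k + r • u - (k - r • u) = (2 * r) • u := by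
      rw [two_mul, add_smul]; abel
    rw [this, norm_smul, hu1, mul_one, Real.norm_eq_abs, abs_of_pos (by linarith)]
  -- the infimum for the extremal pair
  have hinf_eq : sInf ((fun z => dist x z + dist z y) ''
      Metric.sphere (0 : EuclideanSpace ℝ (Fin n)) 1) = 2 * (1 - ‖k‖) := by
    apply le_antisymm
    · apply csInf_le ⟨0, by rintro b ⟨z, hz, rfl⟩; positivity⟩
      refine ⟨u, by rwa [mem_sphere_zero_iff_norm], ?_⟩
      show dist x u + dist u y = 2 * (1 - ‖k‖)
      have hx_u : dist x u = 1 - ‖k‖ - r := by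
        have hxu : x - u = (‖k‖ + r - 1) • u := by
          rw [hxdef]; nth_rewrite 1 [hku]; module
        rw [dist_eq_norm, hxu, norm_smul, hu1, mul_one, Real.norm_eq_abs,
          abs_of_neg (by linarith)]
        ring
      have hu_y : dist u y = 1 - ‖k‖ + r := by
        have huy : u - y = (1 - ‖k‖ + r) • u := by
          rw [hydef]; nth_rewrite 1 [hku]; module
        rw [dist_eq_norm, huy, norm_smul, hu1, mul_one, Real.norm_eq_abs,
          abs_of_pos (by linarith)]
      rw [hx_u, hu_y]; ring
    · apply le_csInf (hsph.image _)
      rintro b ⟨z, hz, rfl⟩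
      rw [mem_sphere_zero_iff_norm] at hz
      show 2 * (1 - ‖k‖) ≤ dist x z + dist z y
      have h1 : 2 * ‖z - k‖ ≤ dist x z + dist z y := by
        have hzz : (z - x) + (z - y) = (2:ℝ) • (z - k) := by
          rw [hxdef, hydef]; module
        calc 2 * ‖z - k‖ = ‖(2:ℝ) • (z - k)‖ := by
              rw [norm_smul, Real.norm_eq_abs]; norm_num
          _ = ‖(z - x) + (z - y)‖ := by rw [hzz]
          _ ≤ ‖z - x‖ + ‖z - y‖ := norm_add_le _ _
          _ = dist x z + dist z y := by rw [← dist_eq_norm, ← dist_eq_norm, dist_comm z x]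
      have h2 : 1 - ‖k‖ ≤ ‖z - k‖ := by
        have := norm_sub_norm_le z k
        linarith
      linarith
  -- membership
  have hmem : r / (1 - ‖k‖) ∈
      {q : ℝ | ∃ x ∈ Metric.closedBall k r, ∃ y ∈ Metric.closedBall k r, q = sB x y} := by
    refine ⟨x, hxmem, y, hymem, ?_⟩
    rw [sB, hinf_eq, hdxy]
    rw [mul_comm 2 r, mul_comm 2 (1 - ‖k‖), mul_div_mul_right _ _ (two_ne_zero)]
  apply le_antisymm
  · apply Real.sSup_le
    · rintro q ⟨a, ha, b, hb, rfl⟩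
      exact hub a ha b hb
    · positivity
  · exact le_csSup ⟨r / (1 - ‖k‖), by rintro q ⟨a, ha, b, hb, rfl⟩; exact hub a ha b hb⟩ hmem
end

section
/- For all x, y in the open unit ball Bⁿ with |y| ≤ |x|, the triangular ratio metric satisfies s_{Bⁿ}(x,y) ≤ |x|. -/
theorem stmt_15 {n : ℕ} (hn : 1 ≤ n) (x y : EuclideanSpace ℝ (Fin n))
    (hx : ‖x‖ < 1) (hy : ‖y‖ ≤ ‖x‖) :
    sB x y ≤ ‖x‖ := by
  haveI : NeZero n := ⟨by omega⟩
  haveI : Nontrivial (EuclideanSpace ℝ (Fin n)) := inferInstance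
  set S := ((fun z => dist x z + dist z y) '' Metric.sphere (0 : EuclideanSpace ℝ (Fin n)) 1)
  have hsph : (Metric.sphere (0 : EuclideanSpace ℝ (Fin n)) 1).Nonempty :=
    NormedSpace.sphere_nonempty.2 zero_le_one
  have hSne : S.Nonempty := hsph.image _
  -- lower bound on elements of S
  have hlb : ∀ a ∈ S, (1 - ‖x‖) + (1 - ‖y‖) ≤ a := by
    rintro a ⟨z, hz, rfl⟩
    have hz' : ‖z‖ = 1 := by simpa using hz
    show 1 - ‖x‖ + (1 - ‖y‖) ≤ dist x z + dist z y
    have h1 : 1 - ‖x‖ ≤ dist x z := by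
      have := norm_sub_norm_le z x
      rw [hz', ← dist_eq_norm, dist_comm] at this
      linarith
    have h2 : 1 - ‖y‖ ≤ dist z y := by
      have := norm_sub_norm_le z y
      rw [hz', ← dist_eq_norm] at this
      linarith
    linarith
  have hSpos : 0 < sInf S := by
    have := le_csInf hSne hlb
    nlinarith [hy.trans_lt hx]
  -- Ptolemy: dist x y ≤ ‖x‖ * a for each a ∈ S
  have key : ∀ a ∈ S, dist x y ≤ ‖x‖ * a := by
    rintro a ⟨z, hz, rfl⟩
    rw [Metric.mem_sphere, dist_comm] at hz
    have hp := EuclideanGeometry.mul_dist_le_mul_dist_add_mul_dist x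
      (0 : EuclideanSpace ℝ (Fin n)) y z
    rw [hz, mul_one] at hp
    have hx0 : dist x (0 : EuclideanSpace ℝ (Fin n)) = ‖x‖ := by
      simp [dist_eq_norm]
    have hy0 : dist (0 : EuclideanSpace ℝ (Fin n)) y = ‖y‖ := by
      simp [dist_eq_norm]
    rw [hx0, hy0] at hp
    have hzy : dist y z = dist z y := dist_comm _ _
    show dist x y ≤ ‖x‖ * (dist x z + dist z y)
    nlinarith [dist_nonneg (x := x) (y := z), dist_nonneg (x := z) (y := y),
      norm_nonneg x, norm_nonneg y]
  have hkey : dist x y ≤ ‖x‖ * sInf S := by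
    rcases eq_or_lt_of_le (norm_nonneg x) with h0 | h0
    · have hxz : x = 0 := by simpa using h0.symm
      have hyz : y = 0 := by
        have : ‖y‖ ≤ 0 := by rw [hxz] at hy; simpa using hy
        simpa using le_antisymm this (norm_nonneg y)
      simp [hxz, hyz]
    · rw [← div_le_iff₀' h0]
      refine le_csInf hSne fun a ha => ?_
      rw [div_le_iff₀' h0]
      exact key a ha
  rw [sB, div_le_iff₀ hSpos]
  calc dist x y ≤ ‖x‖ * sInf S := hkey
    _ = ‖x‖ * sInf S := rfl
end
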